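/- Locality of core numbers: for every node v in a graph G, core(v) equals the largest integer k such that v has at least k neighbors u with core(u) ≥ k. In other words, core(v) = max{k : |{u ∈ nbr(v) : core(u) ≥ k}| ≥ k}. -/
import Mathlib


variable {V : Type*} [Fintype V]

/-- The k-core of `G`, as the set of vertices contained in some subgraph
(vertex set) in which every vertex has at least `k` neighbors inside the set. -/
def coreSet (G : SimpleGraph V) (k : ℕ) : Set V :=
  {v | ∃ S : Set V, v ∈ S ∧ ∀ u ∈ S, k ≤ (S ∩ G.neighborSet u).ncard}

/-- The core number of `v`: the largest `k` such that `v` belongs to the `k`-core. -/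
noncomputable def coreNumber (G : SimpleGraph V) (v : V) : ℕ :=
  sSup {k | v ∈ coreSet G k}

lemma ncard_le_card (S : Set V) : S.ncard ≤ Fintype.card V := by
  calc S.ncard ≤ (Set.univ : Set V).ncard :=
        Set.ncard_le_ncard (Set.subset_univ _) Set.finite_univ
    _ = Fintype.card V := by rw [Set.ncard_univ, Nat.card_eq_fintype_card]

omit [Fintype V] in
lemma coreSet_anti (G : SimpleGraph V) {j k : ℕ} (h : j ≤ k) :
    coreSet G k ⊆ coreSet G j := by
  rintro v ⟨S, hvS, hS⟩
  exact ⟨S, hvS, fun u hu => h.trans (hS u hu)⟩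

lemma bddAbove_coreSets (G : SimpleGraph V) (v : V) :
    BddAbove {k | v ∈ coreSet G k} := by
  refine ⟨Fintype.card V, fun k hk => ?_⟩
  obtain ⟨S, hvS, hS⟩ := hk
  exact (hS v hvS).trans (ncard_le_card _)

lemma mem_coreSet_coreNumber (G : SimpleGraph V) (v : V) :
    v ∈ coreSet G (coreNumber G v) := by
  have h0 : (0 : ℕ) ∈ {k | v ∈ coreSet G k} :=
    ⟨{v}, Set.mem_singleton v, fun u _ => Nat.zero_le _⟩
  exact Nat.sSup_mem ⟨0, h0⟩ (bddAbove_coreSets G v)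

lemma le_coreNumber_iff (G : SimpleGraph V) (v : V) (k : ℕ) :
    k ≤ coreNumber G v ↔ v ∈ coreSet G k := by
  constructor
  · intro h
    exact coreSet_anti G h (mem_coreSet_coreNumber G v)
  · intro h
    exact le_csSup (bddAbove_coreSets G v) h

lemma coreSet_witness (G : SimpleGraph V) (k : ℕ) :
    ∀ u ∈ coreSet G k, k ≤ (coreSet G k ∩ G.neighborSet u).ncard := by
  rintro u ⟨S, huS, hS⟩
  have hsub : S ⊆ coreSet G k := fun w hw => ⟨S, hw, hS⟩
  calc k ≤ (S ∩ G.neighborSet u).ncard := hS u huS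
    _ ≤ (coreSet G k ∩ G.neighborSet u).ncard :=
        Set.ncard_le_ncard (Set.inter_subset_inter_left _ hsub) (Set.toFinite _)

theorem stmt9 (G : SimpleGraph V) (v : V) :
    coreNumber G v =
      sSup {k | k ≤ {u ∈ G.neighborSet v | k ≤ coreNumber G u}.ncard} := by
  set B : Set ℕ := {k | k ≤ {u ∈ G.neighborSet v | k ≤ coreNumber G u}.ncard} with hB
  have hBbdd : BddAbove B := ⟨Fintype.card V, fun k hk => hk.trans (ncard_le_card _)⟩
  have hB0 : (0 : ℕ) ∈ B := Nat.zero_le _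
  apply le_antisymm
  · -- coreNumber G v ∈ B
    apply le_csSup hBbdd
    obtain ⟨S, hvS, hS⟩ := mem_coreSet_coreNumber G v
    have hsub : S ∩ G.neighborSet v ⊆
        {u ∈ G.neighborSet v | coreNumber G v ≤ coreNumber G u} := by
      rintro u ⟨huS, hunb⟩
      exact ⟨hunb, (le_coreNumber_iff G u _).2 ⟨S, huS, hS⟩⟩
    calc coreNumber G v ≤ (S ∩ G.neighborSet v).ncard := hS v hvS
      _ ≤ _ := Set.ncard_le_ncard hsub (Set.toFinite _)
  · have hk : sSup B ∈ B := Nat.sSup_mem ⟨0, hB0⟩ hBbdd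
    set k := sSup B
    rw [le_coreNumber_iff]
    refine ⟨insert v (coreSet G k), Set.mem_insert _ _, ?_⟩
    rintro u (rfl | hu)
    · -- u = v
      have hsub : {w ∈ G.neighborSet u | k ≤ coreNumber G w} ⊆
          insert u (coreSet G k) ∩ G.neighborSet u := by
        rintro w ⟨hwnb, hwk⟩
        exact ⟨Set.mem_insert_iff.2 (Or.inr ((le_coreNumber_iff G w k).1 hwk)), hwnb⟩
      exact hk.trans (Set.ncard_le_ncard hsub (Set.toFinite _))
    · calc k ≤ (coreSet G k ∩ G.neighborSet u).ncard := coreSet_witness G k u hu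
        _ ≤ _ := Set.ncard_le_ncard
            (Set.inter_subset_inter_left _ (Set.subset_insert _ _)) (Set.toFinite _)
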